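/- arXiv:1802.07386 — 5 statements merged into one kernel-verified Lean document; each statement's English description precedes it below -/
import Mathlib

section
/- For all real numbers x₁, x₂, x₃, the determinant of the 3×3 real matrix with rows (1, 2cos(x₁), 2cos(2x₁)), (1, 2cos(x₂), 2cos(2x₂)), (1, 2cos(x₃), 2cos(2x₃)) equals 64·sin((x₁−x₂)/2)·sin((x₁−x₃)/2)·sin((x₂−x₃)/2)·sin((x₁+x₂)/2)·sin((x₁+x₃)/2)·sin((x₂+x₃)/2). -/
open Real

lemma sin_half_mul_sin_half (a b : ℝ) :
    sin ((a - b) / 2) * sin ((a + b) / 2) = (cos b - cos a) / 2 := by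
  have h := Real.cos_sub_cos b a
  rw [show (b - a) / 2 = -((a - b) / 2) by ring, Real.sin_neg] at h
  rw [show (b + a) / 2 = (a + b) / 2 by ring] at h
  linarith

/-- The determinant function δ₀ arising in the right-definiteness analysis of the
3-parameter eigenvalue problem associated with the 4-point boundary value problem
y'' + (λ + 2μ cos x + 2η cos 2x) y = 0: it factors as a product of six sines. -/
theorem fourpoint_delta0_det (x₁ x₂ x₃ : ℝ) :
    (!![1, 2 * cos x₁, 2 * cos (2 * x₁);
        1, 2 * cos x₂, 2 * cos (2 * x₂);
        1, 2 * cos x₃, 2 * cos (2 * x₃)]).det =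
      64 * sin ((x₁ - x₂) / 2) * sin ((x₁ - x₃) / 2) * sin ((x₂ - x₃) / 2) *
        sin ((x₁ + x₂) / 2) * sin ((x₁ + x₃) / 2) * sin ((x₂ + x₃) / 2) := by
  have h1 := sin_half_mul_sin_half x₁ x₂
  have h2 := sin_half_mul_sin_half x₁ x₃
  have h3 := sin_half_mul_sin_half x₂ x₃
  simp [Matrix.det_fin_three, Matrix.vecHead, Matrix.vecTail]
  rw [Real.cos_two_mul x₁, Real.cos_two_mul x₂, Real.cos_two_mul x₃]
  linear_combination
    (-64 * (sin ((x₁ - x₃) / 2) * sin ((x₁ + x₃) / 2)) *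
        (sin ((x₂ - x₃) / 2) * sin ((x₂ + x₃) / 2))) * h1 +
    (-64 * ((cos x₂ - cos x₁) / 2) * (sin ((x₂ - x₃) / 2) * sin ((x₂ + x₃) / 2))) * h2 +
    (-64 * ((cos x₂ - cos x₁) / 2) * ((cos x₃ - cos x₁) / 2)) * h3
end

section
/- For all real numbers x₁, x₂, x₃ with 0 < x₁ < 1, 1 < x₂ < 2, and 2 < x₃ < 3, the determinant of the 3×3 real matrix with rows (1, 2cos(x₁), 2cos(2x₁)), (1, 2cos(x₂), 2cos(2x₂)), (1, 2cos(x₃), 2cos(2x₃)) is strictly negative; in particular it has constant sign on (0,1)×(1,2)×(2,3). -/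
open Real

/-- The determinant function δ₀ of the 4-point boundary value problem has constant
(negative) sign on (0,1) × (1,2) × (2,3). -/
theorem fourpoint_delta0_det_neg (x₁ x₂ x₃ : ℝ)
    (h₁ : 0 < x₁) (h₁' : x₁ < 1) (h₂ : 1 < x₂) (h₂' : x₂ < 2)
    (h₃ : 2 < x₃) (h₃' : x₃ < 3) :
    (!![1, 2 * cos x₁, 2 * cos (2 * x₁);
        1, 2 * cos x₂, 2 * cos (2 * x₂);
        1, 2 * cos x₃, 2 * cos (2 * x₃)]).det < 0 := by
  have hpi : (3 : ℝ) ≤ π := by nlinarith [Real.pi_gt_three]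
  have hab : cos x₂ < cos x₁ :=
    Real.cos_lt_cos_of_nonneg_of_le_pi h₁.le (by linarith) (by linarith)
  have hbc : cos x₃ < cos x₂ :=
    Real.cos_lt_cos_of_nonneg_of_le_pi (by linarith) (by linarith) (by linarith)
  rw [Matrix.det_fin_three]
  simp [Matrix.vecHead, Matrix.vecTail]
  rw [Real.cos_two_mul, Real.cos_two_mul, Real.cos_two_mul]
  set a := cos x₁; set b := cos x₂; set c := cos x₃
  have h1 : b - a < 0 := by linarith
  have h2 : c - a < 0 := by linarith
  have h3 : c - b < 0 := by linarith
  nlinarith [mul_pos (mul_pos (neg_pos.2 h1) (neg_pos.2 h2)) (neg_pos.2 h3)]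
end

section
/- Let x_i ∈ ℂ^{n_i} and λ, μ, η ∈ ℂ satisfy A_i x_i = λ B_i x_i + μ C_i x_i + η D_i x_i for i = 1, 2, 3. Then, with z = x₁ ⊗ x₂ ⊗ x₃ (Kronecker product of vectors), one has Δ₁ z = λ Δ₀ z, Δ₂ z = μ Δ₀ z, and Δ₃ z = η Δ₀ z. -/
open Matrix Kronecker

/-- Kronecker product of vectors. -/
def vecKron {m n : Type*} (x : m → ℂ) (y : n → ℂ) : m × n → ℂ :=
  fun p => x p.1 * y p.2

lemma kron_mulVec {m n : Type*} [Fintype m] [Fintype n] [DecidableEq m] [DecidableEq n]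
    (M : Matrix m m ℂ) (N : Matrix n n ℂ) (x : m → ℂ) (y : n → ℂ) :
    (M ⊗ₖ N) *ᵥ vecKron x y = vecKron (M *ᵥ x) (N *ᵥ y) := by
  funext p
  simp only [mulVec, dotProduct, vecKron, kroneckerMap_apply, Fintype.sum_prod_type]
  rw [Finset.sum_mul_sum]
  congr 1; funext i; congr 1; funext j; ring

/-- If (λ, μ, η) with decomposable vector x₁ ⊗ x₂ ⊗ x₃ is an eigenpair of the
3-parameter eigenvalue problem, then z = x₁ ⊗ x₂ ⊗ x₃ satisfies Δ₁ z = λ Δ₀ z,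
Δ₂ z = μ Δ₀ z and Δ₃ z = η Δ₀ z. -/
theorem threepar_delta_eigen {n₁ n₂ n₃ : ℕ}
    (A₁ B₁ C₁ D₁ : Matrix (Fin n₁) (Fin n₁) ℂ)
    (A₂ B₂ C₂ D₂ : Matrix (Fin n₂) (Fin n₂) ℂ)
    (A₃ B₃ C₃ D₃ : Matrix (Fin n₃) (Fin n₃) ℂ)
    (x₁ : Fin n₁ → ℂ) (x₂ : Fin n₂ → ℂ) (x₃ : Fin n₃ → ℂ)
    (lam mu eta : ℂ)
    (h₁ : A₁ *ᵥ x₁ = lam • (B₁ *ᵥ x₁) + mu • (C₁ *ᵥ x₁) + eta • (D₁ *ᵥ x₁))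
    (h₂ : A₂ *ᵥ x₂ = lam • (B₂ *ᵥ x₂) + mu • (C₂ *ᵥ x₂) + eta • (D₂ *ᵥ x₂))
    (h₃ : A₃ *ᵥ x₃ = lam • (B₃ *ᵥ x₃) + mu • (C₃ *ᵥ x₃) + eta • (D₃ *ᵥ x₃)) :
    letI Δ₀ := B₁ ⊗ₖ (C₂ ⊗ₖ D₃) - B₁ ⊗ₖ (D₂ ⊗ₖ C₃) - C₁ ⊗ₖ (B₂ ⊗ₖ D₃)
      + C₁ ⊗ₖ (D₂ ⊗ₖ B₃) + D₁ ⊗ₖ (B₂ ⊗ₖ C₃) - D₁ ⊗ₖ (C₂ ⊗ₖ B₃)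
    letI Δ₁ := A₁ ⊗ₖ (C₂ ⊗ₖ D₃) - A₁ ⊗ₖ (D₂ ⊗ₖ C₃) - C₁ ⊗ₖ (A₂ ⊗ₖ D₃)
      + C₁ ⊗ₖ (D₂ ⊗ₖ A₃) + D₁ ⊗ₖ (A₂ ⊗ₖ C₃) - D₁ ⊗ₖ (C₂ ⊗ₖ A₃)
    letI Δ₂ := B₁ ⊗ₖ (A₂ ⊗ₖ D₃) - B₁ ⊗ₖ (D₂ ⊗ₖ A₃) - A₁ ⊗ₖ (B₂ ⊗ₖ D₃)
      + A₁ ⊗ₖ (D₂ ⊗ₖ B₃) + D₁ ⊗ₖ (B₂ ⊗ₖ A₃) - D₁ ⊗ₖ (A₂ ⊗ₖ B₃)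
    letI Δ₃ := B₁ ⊗ₖ (C₂ ⊗ₖ A₃) - B₁ ⊗ₖ (A₂ ⊗ₖ C₃) - C₁ ⊗ₖ (B₂ ⊗ₖ A₃)
      + C₁ ⊗ₖ (A₂ ⊗ₖ B₃) + A₁ ⊗ₖ (B₂ ⊗ₖ C₃) - A₁ ⊗ₖ (C₂ ⊗ₖ B₃)
    letI z := vecKron x₁ (vecKron x₂ x₃)
    Δ₁ *ᵥ z = lam • (Δ₀ *ᵥ z) ∧ Δ₂ *ᵥ z = mu • (Δ₀ *ᵥ z) ∧
      Δ₃ *ᵥ z = eta • (Δ₀ *ᵥ z) := by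

  have e1 := fun i => congrFun h₁ i
  have e2 := fun i => congrFun h₂ i
  have e3 := fun i => congrFun h₃ i
  simp only [Pi.add_apply, Pi.smul_apply, smul_eq_mul] at e1 e2 e3
  refine ⟨?_, ?_, ?_⟩ <;>
  · funext p
    simp only [sub_mulVec, add_mulVec, kron_mulVec, Pi.add_apply, Pi.sub_apply,
      Pi.smul_apply, smul_eq_mul, vecKron]
    rw [e1 p.1, e2 p.2.1, e3 p.2.2]
    ring
end

section
/- Let x_i ∈ ℂ^{n_i} (i = 1, 2, 3) and λ, μ, η ∈ ℂ satisfy A_i x_i = λ B_i x_i + μ C_i x_i + η D_i x_i for i = 1, 2, 3, and set z = x₁ ⊗ x₂ ⊗ x₃. If z^H Δ₀ z ≠ 0, then λ = (z^H Δ₁ z)/(z^H Δ₀ z), μ = (z^H Δ₂ z)/(z^H Δ₀ z), and η = (z^H Δ₃ z)/(z^H Δ₀ z); that is, the tensor Rayleigh quotients of an exact eigenvector recover the exact eigenvalue. -/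
open Matrix Kronecker

lemma kron_mulVec_vecKron {m n : Type*} [Fintype m] [Fintype n]
    (M : Matrix m m ℂ) (N : Matrix n n ℂ) (x : m → ℂ) (y : n → ℂ) :
    (M ⊗ₖ N) *ᵥ vecKron x y = vecKron (M *ᵥ x) (N *ᵥ y) := by
  ext ⟨i, j⟩
  simp only [Matrix.mulVec, dotProduct, vecKron, kroneckerMap_apply,
    Fintype.sum_prod_type, Finset.mul_sum, Finset.sum_mul]
  rw [Finset.sum_comm]
  apply Finset.sum_congr rfl
  intro a _
  apply Finset.sum_congr rfl
  intro b _
  ring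

lemma star_vecKron_dot {m n : Type*} [Fintype m] [Fintype n]
    (x u : m → ℂ) (y v : n → ℂ) :
    star (vecKron x y) ⬝ᵥ vecKron u v = (star x ⬝ᵥ u) * (star y ⬝ᵥ v) := by
  simp only [dotProduct, vecKron, Pi.star_apply, Fintype.sum_prod_type,
    Finset.mul_sum, Finset.sum_mul, star_mul']
  rw [Finset.sum_comm]
  apply Finset.sum_congr rfl
  intro a _
  apply Finset.sum_congr rfl
  intro b _
  ring

lemma kron3_quad {n₁ n₂ n₃ : ℕ}
    (M₁ : Matrix (Fin n₁) (Fin n₁) ℂ) (M₂ : Matrix (Fin n₂) (Fin n₂) ℂ)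
    (M₃ : Matrix (Fin n₃) (Fin n₃) ℂ)
    (x₁ : Fin n₁ → ℂ) (x₂ : Fin n₂ → ℂ) (x₃ : Fin n₃ → ℂ) :
    star (vecKron x₁ (vecKron x₂ x₃)) ⬝ᵥ
      ((M₁ ⊗ₖ (M₂ ⊗ₖ M₃)) *ᵥ vecKron x₁ (vecKron x₂ x₃)) =
    (star x₁ ⬝ᵥ (M₁ *ᵥ x₁)) * ((star x₂ ⬝ᵥ (M₂ *ᵥ x₂)) * (star x₃ ⬝ᵥ (M₃ *ᵥ x₃))) := by
  rw [kron_mulVec_vecKron, kron_mulVec_vecKron, star_vecKron_dot, star_vecKron_dot]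

/-- The tensor Rayleigh quotients of an exact eigenvector of a 3-parameter eigenvalue
problem recover the exact eigenvalue. -/
theorem threepar_tensor_rayleigh_quotient {n₁ n₂ n₃ : ℕ}
    (A₁ B₁ C₁ D₁ : Matrix (Fin n₁) (Fin n₁) ℂ)
    (A₂ B₂ C₂ D₂ : Matrix (Fin n₂) (Fin n₂) ℂ)
    (A₃ B₃ C₃ D₃ : Matrix (Fin n₃) (Fin n₃) ℂ)
    (x₁ : Fin n₁ → ℂ) (x₂ : Fin n₂ → ℂ) (x₃ : Fin n₃ → ℂ)
    (lam mu eta : ℂ)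
    (h₁ : A₁ *ᵥ x₁ = lam • (B₁ *ᵥ x₁) + mu • (C₁ *ᵥ x₁) + eta • (D₁ *ᵥ x₁))
    (h₂ : A₂ *ᵥ x₂ = lam • (B₂ *ᵥ x₂) + mu • (C₂ *ᵥ x₂) + eta • (D₂ *ᵥ x₂))
    (h₃ : A₃ *ᵥ x₃ = lam • (B₃ *ᵥ x₃) + mu • (C₃ *ᵥ x₃) + eta • (D₃ *ᵥ x₃)) :
    letI Δ₀ := B₁ ⊗ₖ (C₂ ⊗ₖ D₃) - B₁ ⊗ₖ (D₂ ⊗ₖ C₃) - C₁ ⊗ₖ (B₂ ⊗ₖ D₃)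
      + C₁ ⊗ₖ (D₂ ⊗ₖ B₃) + D₁ ⊗ₖ (B₂ ⊗ₖ C₃) - D₁ ⊗ₖ (C₂ ⊗ₖ B₃)
    letI Δ₁ := A₁ ⊗ₖ (C₂ ⊗ₖ D₃) - A₁ ⊗ₖ (D₂ ⊗ₖ C₃) - C₁ ⊗ₖ (A₂ ⊗ₖ D₃)
      + C₁ ⊗ₖ (D₂ ⊗ₖ A₃) + D₁ ⊗ₖ (A₂ ⊗ₖ C₃) - D₁ ⊗ₖ (C₂ ⊗ₖ A₃)
    letI Δ₂ := B₁ ⊗ₖ (A₂ ⊗ₖ D₃) - B₁ ⊗ₖ (D₂ ⊗ₖ A₃) - A₁ ⊗ₖ (B₂ ⊗ₖ D₃)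
      + A₁ ⊗ₖ (D₂ ⊗ₖ B₃) + D₁ ⊗ₖ (B₂ ⊗ₖ A₃) - D₁ ⊗ₖ (A₂ ⊗ₖ B₃)
    letI Δ₃ := B₁ ⊗ₖ (C₂ ⊗ₖ A₃) - B₁ ⊗ₖ (A₂ ⊗ₖ C₃) - C₁ ⊗ₖ (B₂ ⊗ₖ A₃)
      + C₁ ⊗ₖ (A₂ ⊗ₖ B₃) + A₁ ⊗ₖ (B₂ ⊗ₖ C₃) - A₁ ⊗ₖ (C₂ ⊗ₖ B₃)
    letI z := vecKron x₁ (vecKron x₂ x₃)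
    star z ⬝ᵥ (Δ₀ *ᵥ z) ≠ 0 →
      lam = (star z ⬝ᵥ (Δ₁ *ᵥ z)) / (star z ⬝ᵥ (Δ₀ *ᵥ z)) ∧
      mu = (star z ⬝ᵥ (Δ₂ *ᵥ z)) / (star z ⬝ᵥ (Δ₀ *ᵥ z)) ∧
      eta = (star z ⬝ᵥ (Δ₃ *ᵥ z)) / (star z ⬝ᵥ (Δ₀ *ᵥ z)) := by
  intro h0
  have e₁ : star x₁ ⬝ᵥ (A₁ *ᵥ x₁) = lam * (star x₁ ⬝ᵥ (B₁ *ᵥ x₁))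
      + mu * (star x₁ ⬝ᵥ (C₁ *ᵥ x₁)) + eta * (star x₁ ⬝ᵥ (D₁ *ᵥ x₁)) := by
    rw [h₁]; simp [dotProduct_add, dotProduct_smul, smul_eq_mul]
  have e₂ : star x₂ ⬝ᵥ (A₂ *ᵥ x₂) = lam * (star x₂ ⬝ᵥ (B₂ *ᵥ x₂))
      + mu * (star x₂ ⬝ᵥ (C₂ *ᵥ x₂)) + eta * (star x₂ ⬝ᵥ (D₂ *ᵥ x₂)) := by
    rw [h₂]; simp [dotProduct_add, dotProduct_smul, smul_eq_mul]
  have e₃ : star x₃ ⬝ᵥ (A₃ *ᵥ x₃) = lam * (star x₃ ⬝ᵥ (B₃ *ᵥ x₃))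
      + mu * (star x₃ ⬝ᵥ (C₃ *ᵥ x₃)) + eta * (star x₃ ⬝ᵥ (D₃ *ᵥ x₃)) := by
    rw [h₃]; simp [dotProduct_add, dotProduct_smul, smul_eq_mul]
  refine ⟨?_, ?_, ?_⟩ <;>
  · rw [eq_div_iff h0]
    simp only [Matrix.sub_mulVec, Matrix.add_mulVec, dotProduct_sub, dotProduct_add,
      kron3_quad, e₁, e₂, e₃]
    ring
end

section
/- Let M be an invertible n×n complex matrix and u ∈ ℂⁿ with u^H u = 1 and u^H M u = 0. Set z = M⁻¹u and assume u^H z ≠ 0. Then the vector v = −u + (u^H z)⁻¹ z satisfies u^H v = 0 and (I − u u^H) M v = −M u; that is, v is an exact solution of the Jacobi–Davidson correction equation (I − u u^H) M v = −r with r = M u and v ⊥ u. -/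
open Matrix

/-- Exact solution of the Jacobi–Davidson correction equation: if M is invertible,
u is a unit vector with uᴴ M u = 0, z = M⁻¹ u and uᴴ z ≠ 0, then
v = −u + (uᴴ z)⁻¹ z satisfies v ⊥ u and (I − u uᴴ) M v = −M u. -/
theorem jacobi_davidson_correction_exact {n : ℕ}
    (M : Matrix (Fin n) (Fin n) ℂ) (hM : IsUnit M)
    (u : Fin n → ℂ) (hu : star u ⬝ᵥ u = 1)
    (hgal : star u ⬝ᵥ (M *ᵥ u) = 0)
    (z : Fin n → ℂ) (hz : z = M⁻¹ *ᵥ u)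
    (huz : star u ⬝ᵥ z ≠ 0) :
    letI v := -u + (star u ⬝ᵥ z)⁻¹ • z
    star u ⬝ᵥ v = 0 ∧
      ((1 : Matrix (Fin n) (Fin n) ℂ) - vecMulVec u (star u)) *ᵥ (M *ᵥ v) =
        -(M *ᵥ u) := by
  have hMz : M *ᵥ z = u := by
    rw [hz, Matrix.mulVec_mulVec, Matrix.mul_nonsing_inv _ ((Matrix.isUnit_iff_isUnit_det M).mp hM),
      Matrix.one_mulVec]
  set α := star u ⬝ᵥ z with hα
  have h1 : star u ⬝ᵥ (-u + α⁻¹ • z) = 0 := by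
    rw [dotProduct_add, dotProduct_neg, hu, dotProduct_smul, ← hα, smul_eq_mul,
      inv_mul_cancel₀ huz, neg_add_cancel]
  refine ⟨h1, ?_⟩
  have hMv : M *ᵥ (-u + α⁻¹ • z) = -(M *ᵥ u) + α⁻¹ • u := by
    rw [Matrix.mulVec_add, Matrix.mulVec_neg, Matrix.mulVec_smul, hMz]
  rw [Matrix.sub_mulVec, Matrix.one_mulVec, hMv]
  have hproj : vecMulVec u (star u) *ᵥ (-(M *ᵥ u) + α⁻¹ • u) = α⁻¹ • u := by
    have : ∀ x : Fin n → ℂ, vecMulVec u (star u) *ᵥ x = (star u ⬝ᵥ x) • u := by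
      intro x
      ext i
      simp [vecMulVec_apply, mulVec, dotProduct, Finset.mul_sum, mul_assoc, mul_comm, mul_left_comm]
    rw [this, dotProduct_add, dotProduct_neg, hgal, dotProduct_smul, hu]
    simp
  rw [hproj]
  abel
end
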